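/- Let (n_k) be lacunary with ratio α > 1 and σ_n the Fejér mean operator on L²(ℝ) (Fourier multiplier with symbol max(0, 1 − |x|/(n+1))). Then for every f ∈ L²(ℝ) the series ∑_{k=1}^{∞} (σ_{n_{k+1}} f − σ_{n_k} f) converges unconditionally in L²(ℝ). -/

import Mathlib

/-!
After the Plancherel transform, a block `∑_{M < k ≤ N} ε_k (σ_{n_{k+1}} f - σ_{n_k} f)` is
multiplication of `F f` by `∑ ε_k (K̂_{n_{k+1}} - K̂_{n_k})`. The symbols `K̂_m(x)` increase with `m`,
so this sum telescopes to a bound `1 - K̂_{n_{M+1}}(x)`, independently of the signs. Lacunarity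
forces `n_k → ∞`, hence `1 - K̂_{n_{M+1}} → 0` pointwise, and dominated convergence makes the
blocks tend to `0` in `L²`: the signed partial sums are Cauchy.
-/

open MeasureTheory FourierTransform

/-- Fejér multiplier symbol. -/
noncomputable def fejerSymbol (n : ℕ) (x : ℝ) : ℝ := max 0 (1 - |x| / (n + 1))

open Filter Finset Topology
open scoped ENNReal

theorem fejerSymbol_nonneg (n : ℕ) (x : ℝ) : 0 ≤ fejerSymbol n x := le_max_left _ _

theorem monotone_fejerSymbol (x : ℝ) : Monotone (fejerSymbol · x) := fun m n hmn => by
  have : (m : ℝ) + 1 ≤ n + 1 := by exact_mod_cast Nat.succ_le_succ hmn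
  exact max_le_max le_rfl (sub_le_sub_left (div_le_div_of_nonneg_left (abs_nonneg x)
    (by positivity) this) 1)

theorem continuous_fejerSymbol (n : ℕ) : Continuous (fejerSymbol n) := by
  unfold fejerSymbol
  fun_prop

theorem tendsto_fejerSymbol_atTop (x : ℝ) : Tendsto (fejerSymbol · x) atTop (𝓝 1) := by
  have h : Tendsto (fun n : ℕ => |x| / ((n : ℝ) + 1)) atTop (𝓝 0) :=
    tendsto_const_nhds.div_atTop (tendsto_atTop_add_const_right _ 1 tendsto_natCast_atTop_atTop)
  simpa [fejerSymbol] using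
    (tendsto_const_nhds (x := (0 : ℝ))).max ((tendsto_const_nhds (x := (1 : ℝ))).sub h)

section Lacunary

variable {n : ℕ → ℕ} {α : ℝ}

theorem mul_le_of_lacunary (hn : ∀ k, 0 < n k) (hlac : ∀ k, α ≤ (n (k + 1) : ℝ) / n k) (k : ℕ) :
    α * n k ≤ n (k + 1) :=
  (le_div_iff₀ (by exact_mod_cast hn k)).1 (hlac k)

theorem monotone_of_lacunary (hn : ∀ k, 0 < n k) (hα : 1 ≤ α)
    (hlac : ∀ k, α ≤ (n (k + 1) : ℝ) / n k) : Monotone n :=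
  monotone_nat_of_le_succ fun k => by
    have := mul_le_of_lacunary hn hlac k
    exact_mod_cast le_trans (le_mul_of_one_le_left (Nat.cast_nonneg _) hα) this

theorem tendsto_atTop_of_lacunary (hn : ∀ k, 0 < n k) (hα : 1 < α)
    (hlac : ∀ k, α ≤ (n (k + 1) : ℝ) / n k) : Tendsto n atTop atTop :=
  tendsto_natCast_atTop_iff.1 <|
    tendsto_atTop_of_geom_le (by exact_mod_cast hn 0) hα (mul_le_of_lacunary hn hlac)

end Lacunary

theorem norm_sum_Ioc_mul_sub_le {a : ℕ → ℝ} (ha : Monotone a) {c : ℕ → ℂ} (hc : ∀ k, ‖c k‖ ≤ 1)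
    {M N : ℕ} (hMN : M ≤ N) :
    ‖∑ k ∈ Ioc M N, c k * ((a (k + 1) : ℂ) - a k)‖ ≤ a (N + 1) - a (M + 1) := by
  calc ‖∑ k ∈ Ioc M N, c k * ((a (k + 1) : ℂ) - a k)‖
      ≤ ∑ k ∈ Ioc M N, ‖c k * ((a (k + 1) : ℂ) - a k)‖ := norm_sum_le _ _
    _ ≤ ∑ k ∈ Ioc M N, (a (k + 1) - a k) := sum_le_sum fun k _ => by
        rw [norm_mul, ← Complex.ofReal_sub, Complex.norm_real, Real.norm_eq_abs,
          abs_of_nonneg (sub_nonneg.2 (ha k.le_succ))]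
        exact mul_le_of_le_one_left (sub_nonneg.2 (ha k.le_succ)) (hc k)
    _ = a (N + 1) - a (M + 1) := by
        rw [← Finset.Ico_add_one_add_one_eq_Ioc, sum_Ico_sub a (by omega)]

theorem sum_Icc_one_sub_sum_Icc_one {G : Type*} [AddCommGroup G] (u : ℕ → G) {M N : ℕ}
    (hMN : M ≤ N) : ∑ k ∈ Icc 1 N, u k - ∑ k ∈ Icc 1 M, u k = ∑ k ∈ Ioc M N, u k := by
  have hIcc : ∀ K, Icc 1 K = Ioc 0 K := fun K => Icc_succ_left_eq_Ioc 0 K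
  rw [hIcc, hIcc, ← sum_Ioc_consecutive _ (Nat.zero_le M) hMN, add_sub_cancel_left]

theorem tendsto_eLpNorm_smul_of_tendsto_zero {X E : Type*} [MeasurableSpace X] {μ : Measure X}
    [NormedAddCommGroup E] [NormedSpace ℝ E] {p : ℝ≥0∞} (hp0 : p ≠ 0) (hp : p ≠ ∞)
    {h : X → E} (hh : MemLp h p μ) {c : ℕ → X → ℝ} (hc_meas : ∀ M, AEStronglyMeasurable (c M) μ)
    (hc_le : ∀ M x, |c M x| ≤ 1) (hc_lim : ∀ x, Tendsto (c · x) atTop (𝓝 0)) :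
    Tendsto (fun M => eLpNorm (fun x => c M x • h x) p μ) atTop (𝓝 0) := by
  have hp_pos : 0 < p.toReal := ENNReal.toReal_pos hp0 hp
  simp_rw [eLpNorm_eq_lintegral_rpow_enorm_toReal hp0 hp]
  have hint : Tendsto (fun M => ∫⁻ x, ‖c M x • h x‖ₑ ^ p.toReal ∂μ) atTop (𝓝 0) := by
    rw [← lintegral_zero]
    refine tendsto_lintegral_of_dominated_convergence' (fun x => ‖h x‖ₑ ^ p.toReal)
      (fun M => ((hc_meas M).smul hh.1).enorm.pow_const _) (fun M => ae_of_all _ fun x => ?_)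
      (lintegral_rpow_enorm_lt_top_of_eLpNorm_lt_top hp0 hp hh.2).ne (ae_of_all _ fun x => ?_)
    · dsimp only
      rw [enorm_smul]
      gcongr
      exact mul_le_of_le_one_left' (by simpa [Real.enorm_eq_ofReal_abs] using hc_le M x)
    · have : Tendsto (fun M => ‖c M x • h x‖ₑ) atTop (𝓝 0) := by
        simpa using ((hc_lim x).smul_const (h x)).enorm
      simpa [Function.comp_def, ENNReal.zero_rpow_of_pos hp_pos] using
        ((ENNReal.continuous_rpow_const (y := p.toReal)).tendsto 0).comp this
  simpa [Function.comp_def, ENNReal.zero_rpow_of_pos (inv_pos.2 hp_pos)] using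
    ((ENNReal.continuous_rpow_const (y := p.toReal⁻¹)).tendsto 0).comp hint

section Multiplier

variable {X V : Type*} [MeasurableSpace X] {μ : Measure X} {p : ℝ≥0∞} [Fact (1 ≤ p)]
  [SeminormedAddCommGroup V] [NormedSpace ℂ V]

def HasSymbol (F : V →ₗᵢ[ℂ] Lp ℂ p μ) (A : V →ₗ[ℂ] V) (φ : X → ℂ) : Prop :=
  ∀ f, ⇑(F (A f)) =ᵐ[μ] fun x => φ x * F f x

variable {F : V →ₗᵢ[ℂ] Lp ℂ p μ} {A B : V →ₗ[ℂ] V} {φ ψ : X → ℂ}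

theorem HasSymbol.sub (hA : HasSymbol F A φ) (hB : HasSymbol F B ψ) :
    HasSymbol F (A - B) (fun x => φ x - ψ x) := fun f => by
  rw [LinearMap.sub_apply, map_sub]
  filter_upwards [Lp.coeFn_sub (F (A f)) (F (B f)), hA f, hB f] with x h hAx hBx
  rw [h, Pi.sub_apply, hAx, hBx, sub_mul]

theorem HasSymbol.smul (hA : HasSymbol F A φ) (c : ℂ) :
    HasSymbol F (c • A) (fun x => c * φ x) := fun f => by
  rw [LinearMap.smul_apply, map_smul]
  filter_upwards [Lp.coeFn_smul c (F (A f)), hA f] with x h hAx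
  rw [h, Pi.smul_apply, hAx, smul_eq_mul, mul_assoc]

theorem HasSymbol.sum {ι : Type*} (s : Finset ι) {A : ι → V →ₗ[ℂ] V} {φ : ι → X → ℂ}
    (hA : ∀ i ∈ s, HasSymbol F (A i) (φ i)) :
    HasSymbol F (∑ i ∈ s, A i) (fun x => ∑ i ∈ s, φ i x) := fun f => by
  rw [LinearMap.sum_apply, map_sum]
  have hAf : ∀ᵐ x ∂μ, ∀ i ∈ s, F (A i f) x = φ i x * F f x :=
    (eventually_all_finset s).2 fun i hi => hA i hi f
  filter_upwards [Lp.coeFn_fun_finsetSum s (fun i => F (A i f)), hAf] with x h hAx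
  rw [h, sum_mul]
  exact sum_congr rfl hAx

theorem HasSymbol.norm_apply_le (hA : HasSymbol F A φ) (f : V) {d : X → ℝ}
    (hφd : ∀ x, ‖φ x‖ ≤ d x) (hd : ∀ x, d x ≤ 1) :
    ‖A f‖ ≤ (eLpNorm (fun x => d x • F f x) p μ).toReal := by
  have hd_abs : ∀ x, |d x| = d x := fun x => abs_of_nonneg ((norm_nonneg _).trans (hφd x))
  have hfin : eLpNorm (fun x => d x • F f x) p μ ≠ ∞ := by
    refine (lt_of_le_of_lt (eLpNorm_mono fun x => ?_) (Lp.eLpNorm_lt_top (F f))).ne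
    rw [norm_smul, Real.norm_eq_abs, hd_abs]
    exact mul_le_of_le_one_left (norm_nonneg _) (hd x)
  rw [← F.norm_map, Lp.norm_def]
  refine ENNReal.toReal_mono hfin (eLpNorm_mono_ae ?_)
  filter_upwards [hA f] with x hx
  rw [hx, norm_mul, norm_smul, Real.norm_eq_abs, hd_abs]
  exact mul_le_mul_of_nonneg_right (hφd x) (norm_nonneg _)

theorem cauchySeq_sum_smul_sub_of_hasSymbol (hp : p ≠ ∞) {φ : ℕ → X → ℝ}
    (hφ_meas : ∀ k, AEStronglyMeasurable (φ k) μ) (hφ_nonneg : ∀ k x, 0 ≤ φ k x)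
    (hφ_mono : ∀ x, Monotone (φ · x)) (hφ_lim : ∀ x, Tendsto (φ · x) atTop (𝓝 1))
    {T : ℕ → V →ₗ[ℂ] V} (hT : ∀ k, HasSymbol F (T k) (fun x => (φ k x : ℂ)))
    {c : ℕ → ℂ} (hc : ∀ k, ‖c k‖ ≤ 1) (f : V) :
    CauchySeq fun N => ∑ k ∈ Icc 1 N, c k • (T (k + 1) f - T k f) := by
  have hφ_le : ∀ k x, φ k x ≤ 1 := fun k x => (hφ_mono x).ge_of_tendsto (hφ_lim x) k
  have hsym : ∀ s : Finset ℕ, HasSymbol F (∑ k ∈ s, c k • (T (k + 1) - T k))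
      (fun x => ∑ k ∈ s, c k * ((φ (k + 1) x : ℂ) - φ k x)) :=
    fun s => HasSymbol.sum s fun k _ => ((hT _).sub (hT _)).smul _
  set d : ℕ → X → ℝ := fun M x => 1 - φ (M + 1) x
  refine cauchySeq_of_le_tendsto_0' (fun M => (eLpNorm (fun x => d M x • F f x) p μ).toReal)
    (fun M N hMN => ?_) ?_
  · have htail : ∑ k ∈ Icc 1 N, c k • (T (k + 1) f - T k f)
        - ∑ k ∈ Icc 1 M, c k • (T (k + 1) f - T k f)
        = (∑ k ∈ Ioc M N, c k • (T (k + 1) - T k)) f := by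
      simp only [sum_Icc_one_sub_sum_Icc_one _ hMN, LinearMap.sum_apply, LinearMap.smul_apply,
        LinearMap.sub_apply]
    rw [dist_comm, dist_eq_norm, htail]
    refine (hsym _).norm_apply_le f (fun x => ?_) (fun x => sub_le_self _ (hφ_nonneg _ x))
    exact (norm_sum_Ioc_mul_sub_le (hφ_mono x) hc hMN).trans
      (sub_le_sub_right (hφ_le _ x) _)
  · have hd_lim : ∀ x, Tendsto (d · x) atTop (𝓝 0) := fun x => by
      simpa [d] using (tendsto_const_nhds (x := (1 : ℝ))).sub
        ((hφ_lim x).comp (tendsto_add_atTop_nat 1))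
    have hd_le : ∀ M x, |d M x| ≤ 1 := fun M x =>
      abs_le.2 ⟨by linarith [hφ_le (M + 1) x], by linarith [hφ_nonneg (M + 1) x]⟩
    rw [← ENNReal.toReal_zero]
    exact (ENNReal.tendsto_toReal ENNReal.zero_ne_top).comp
      (tendsto_eLpNorm_smul_of_tendsto_zero (zero_lt_one.trans_le Fact.out).ne' hp
        (Lp.memLp (F f)) (fun M => aestronglyMeasurable_const.sub (hφ_meas _)) hd_le hd_lim)

end Multiplier

theorem stmt_7_general
    (n : ℕ → ℕ) (hn : ∀ k, 0 < n k) (α : ℝ) (hα : 1 < α)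
    (hlac : ∀ k, α ≤ (n (k + 1) : ℝ) / (n k : ℝ))
    -- `F` is the Plancherel (Fourier) transform on `L²(ℝ)`.
    (F : Lp ℂ 2 (volume : Measure ℝ) ≃ₗᵢ[ℂ] Lp ℂ 2 (volume : Measure ℝ))
    -- `σ m` is the Fejér mean: the Fourier multiplier with symbol `fejerSymbol m`.
    (σ : ℕ → (Lp ℂ 2 (volume : Measure ℝ) →ₗ[ℂ] Lp ℂ 2 (volume : Measure ℝ)))
    (hσ : ∀ m f, (F (σ m f) : ℝ → ℂ) =ᵐ[volume]
      fun x => (fejerSymbol m x : ℂ) * (F f : ℝ → ℂ) x) :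
    -- unconditional convergence: every choice of signs gives a convergent series
    ∀ f : Lp ℂ 2 (volume : Measure ℝ), ∀ ε : ℕ → ℝ, (∀ k, ε k = 1 ∨ ε k = -1) →
      ∃ g : Lp ℂ 2 (volume : Measure ℝ),
        Filter.Tendsto
          (fun N => ∑ k ∈ Finset.Icc 1 N, (ε k : ℂ) • (σ (n (k + 1)) f - σ (n k) f))
          Filter.atTop (nhds g) := by
  intro f ε hε
  have hε_norm : ∀ k, ‖(ε k : ℂ)‖ ≤ 1 := fun k => by rcases hε k with h | h <;> simp [h]
  exact cauchySeq_tendsto_of_complete <|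
    cauchySeq_sum_smul_sub_of_hasSymbol (F := F.toLinearIsometry) ENNReal.ofNat_ne_top
      (fun k => (continuous_fejerSymbol (n k)).aestronglyMeasurable)
      (fun k => fejerSymbol_nonneg (n k))
      (fun x => (monotone_fejerSymbol x).comp (monotone_of_lacunary hn hα.le hlac))
      (fun x => (tendsto_fejerSymbol_atTop x).comp (tendsto_atTop_of_lacunary hn hα hlac))
      (fun k => hσ (n k)) hε_norm f

theorem stmt_7
    (n : ℕ → ℕ) (hn : ∀ k, 0 < n k) (α : ℝ) (hα : 1 < α)
    (hlac : ∀ k, α ≤ (n (k + 1) : ℝ) / (n k : ℝ))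
    -- `F` is the Plancherel (Fourier) transform on `L²(ℝ)`.
    (F : Lp ℂ 2 (volume : Measure ℝ) ≃ₗᵢ[ℂ] Lp ℂ 2 (volume : Measure ℝ))
    (hF : ∀ f : Lp ℂ 2 (volume : Measure ℝ), Integrable f volume →
      (F f : ℝ → ℂ) =ᵐ[volume] FourierTransform.fourier (f : ℝ → ℂ))
    -- `σ m` is the Fejér mean: the Fourier multiplier with symbol `fejerSymbol m`.
    (σ : ℕ → (Lp ℂ 2 (volume : Measure ℝ) →ₗ[ℂ] Lp ℂ 2 (volume : Measure ℝ)))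
    (hσ : ∀ m f, (F (σ m f) : ℝ → ℂ) =ᵐ[volume]
      fun x => (fejerSymbol m x : ℂ) * (F f : ℝ → ℂ) x) :
    -- unconditional convergence: every choice of signs gives a convergent series
    ∀ f : Lp ℂ 2 (volume : Measure ℝ), ∀ ε : ℕ → ℝ, (∀ k, ε k = 1 ∨ ε k = -1) →
      ∃ g : Lp ℂ 2 (volume : Measure ℝ),
        Filter.Tendsto
          (fun N => ∑ k ∈ Finset.Icc 1 N, (ε k : ℂ) • (σ (n (k + 1)) f - σ (n k) f))
          Filter.atTop (nhds g) :=
  stmt_7_general n hn α hα hlac F σ hσ
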